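/- arXiv:0803.2076 — 2 statements merged into one kernel-verified Lean document; each statement's English description precedes it below -/
import Mathlib

section
/- Let w = t_λ·v ∈ W⁰ (λ ∈ X, v ∈ W). Then for every positive root α ∈ R⁺ one has 0 ≤ ⟨λ,α∨⟩ ≤ ⟨ρ,α∨⟩; moreover the second inequality is strict (⟨λ,α∨⟩ < ⟨ρ,α∨⟩) if v⁻¹α ∈ R⁺, and the first one is strict (0 < ⟨λ,α∨⟩) if v⁻¹α ∈ R⁻. -/
/-- A package of data and axioms encoding a finite reduced crystallographic root system
`R` spanning a real vector space `E`, with a chosen system of positive roots `Rpos`,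
simple roots `simples`, coroot pairing `coroot` (so `coroot α x = ⟨x, α∨⟩`),
Weyl group `W` (as a group of linear automorphisms of `E`), longest element `w0`,
half-sum of positive roots `rho`, and an integer `p` with `⟨ρ, α∨⟩ < p` for all
positive roots `α` (i.e. `p` is bigger than the Coxeter number). -/
structure RootSystemData (E : Type) [AddCommGroup E] [Module ℝ E] : Type where
  R : Finset E
  Rpos : Finset E
  simples : Finset E
  coroot : E → (E →ₗ[ℝ] ℝ)
  W : Subgroup (E ≃ₗ[ℝ] E)
  w0 : E ≃ₗ[ℝ] E
  rho : E
  p : ℤ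
  finiteDim : FiniteDimensional ℝ E
  span_eq : Submodule.span ℝ (R : Set E) = ⊤
  zero_not_mem : (0 : E) ∉ R
  reduced : ∀ α ∈ R, ∀ c : ℝ, c • α ∈ R → c = 1 ∨ c = -1
  rpos_subset : Rpos ⊆ R
  neg_mem : ∀ α ∈ R, -α ∈ R
  pos_iff : ∀ α ∈ R, (α ∈ Rpos ↔ -α ∉ Rpos)
  simples_subset : simples ⊆ Rpos
  pos_sum_simples : ∀ α ∈ Rpos, ∃ c : E → ℕ, α = ∑ β ∈ simples, (c β : ℝ) • β
  coroot_self : ∀ α ∈ R, coroot α α = 2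
  crystallographic : ∀ α ∈ R, ∀ β ∈ R, ∃ n : ℤ, coroot α β = (n : ℝ)
  reflection_mem : ∀ α ∈ R, ∀ β ∈ R, β - coroot α β • α ∈ R
  W_gen : W = Subgroup.closure
    {s : E ≃ₗ[ℝ] E | ∃ α ∈ R, ∀ x : E, s x = x - coroot α x • α}
  W_root_stable : ∀ v ∈ W, ∀ α ∈ R, v α ∈ R
  W_equivariant : ∀ v ∈ W, ∀ α x : E, coroot (v α) (v x) = coroot α x
  w0_mem : w0 ∈ W
  w0_neg : ∀ α ∈ Rpos, -(w0 α) ∈ Rpos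
  w0_sq : w0 * w0 = 1
  nondeg : ∀ x : E, (∀ α ∈ R, coroot α x = 0) → x = 0
  rho_def : (2 : ℝ) • rho = ∑ α ∈ Rpos, α
  rho_simple : ∀ α ∈ simples, coroot α rho = 1
  p_pos : 0 < p
  p_gt : ∀ α ∈ Rpos, coroot α rho < (p : ℝ)

namespace RootSystemData

variable {E : Type} [AddCommGroup E] [Module ℝ E] [DecidableEq E] (D : RootSystemData E)

/-- Membership in the weight lattice `X = {λ ∈ E : ⟨λ, α∨⟩ ∈ ℤ for all α ∈ R}`. -/
def IsWeight (x : E) : Prop := ∀ α ∈ D.R, ∃ n : ℤ, D.coroot α x = (n : ℝ)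

/-- A weight `μ` is dominant if `⟨μ, α∨⟩ ≥ 0` for all simple roots `α`. -/
def IsDominant (μ : E) : Prop := ∀ α ∈ D.simples, 0 ≤ D.coroot α μ

/-- A weight `μ` is restricted if `⟨μ, α∨⟩ ≤ p - 1` for all simple roots `α`. -/
def IsRestricted (μ : E) : Prop := ∀ α ∈ D.simples, D.coroot α μ ≤ (D.p : ℝ) - 1

/-- The value of the dot-action of the element `t_lam · v` of the extended affine Weyl
group `W'_aff = W ⋉ X` on the weight `0`:  `(t_lam · v) • 0 = v(0 + ρ) - ρ + p • lam`. -/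
def dotZero (v : E ≃ₗ[ℝ] E) (lam : E) : E := v D.rho - D.rho + (D.p : ℝ) • lam

/-- The condition `t_lam · v ∈ W⁰`, i.e. `(t_lam · v) • 0` is restricted and dominant
(together with the requirements `v ∈ W`, `lam ∈ X`). -/
def InW0 (v : E ≃ₗ[ℝ] E) (lam : E) : Prop :=
  v ∈ D.W ∧ D.IsWeight lam ∧ D.IsDominant (D.dotZero v lam) ∧ D.IsRestricted (D.dotZero v lam)

/-- The Iwahori–Matsumoto length of the element `w · t_x` of `W'_aff`:
`ℓ(w·t_x) = Σ_{α ∈ R⁺ ∩ w⁻¹(R⁺)} |⟨x,α∨⟩| + Σ_{α ∈ R⁺ ∩ w⁻¹(R⁻)} |1 + ⟨x,α∨⟩|`. -/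
noncomputable def len (w : E ≃ₗ[ℝ] E) (x : E) : ℝ :=
  (∑ α ∈ D.Rpos.filter (fun α => w α ∈ D.Rpos), |D.coroot α x|) +
    (∑ α ∈ D.Rpos.filter (fun α => -(w α) ∈ D.Rpos), |1 + D.coroot α x|)

/-- The length of `t_lam · v = v · t_{v⁻¹ lam}`. -/
noncomputable def lenT (v : E ≃ₗ[ℝ] E) (lam : E) : ℝ := D.len v (v.symm lam)

end RootSystemData

/-! The pairings are controlled by the `W`-invariant positive definite form
`(x, y) = ∑_{β ∈ R} ⟨x, β∨⟩ ⟨y, β∨⟩`: invariance under `s_α` gives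
`⟨x, α∨⟩ (α, α) = 2 (x, α)`, so the sign of `⟨x, α∨⟩` is that of `(x, α)`, which is linear in `α`;
hence dominance on the simple roots propagates to all of `R⁺`, and `⟨ρ, α∨⟩ > 0` on `R⁺`.
Applying this to `μ = w • 0 = vρ - ρ + pλ` and to `(p - 1)ρ - μ` gives, with `c = ⟨ρ, (v⁻¹α)∨⟩`,
`⟨ρ, α∨⟩ - c ≤ p ⟨λ, α∨⟩ ≤ p ⟨ρ, α∨⟩ - c`, where `0 < |c| < p` and `c` has the sign of `v⁻¹α`.
The claimed bounds follow from the integrality of `⟨λ, α∨⟩` and of `⟨ρ, α∨⟩`; the latter is a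
parity count over `R⁺`. -/

theorem exists_sum_eq_two_mul_of_involution {ι : Type*} (s : Finset ι) (f : ι → ℝ)
    (g : ι → ι) (hf : ∀ i ∈ s, ∃ n : ℤ, f i = n) (hg : ∀ i ∈ s, g i ∈ s)
    (hgg : ∀ i ∈ s, g (g i) = i) (hfg : ∀ i ∈ s, f (g i) = f i ∨ f (g i) = -f i)
    (hfix : ∀ i ∈ s, g i = i → ∃ n : ℤ, f i = 2 * n) :
    ∃ n : ℤ, ∑ i ∈ s, f i = 2 * n := by
  let π := QuotientAddGroup.mk' (AddSubgroup.zmultiples (2 : ℝ))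
  have hπ : ∀ x : ℝ, π x = 0 ↔ ∃ n : ℤ, x = 2 * n := fun x => by
    rw [QuotientAddGroup.mk'_apply, QuotientAddGroup.eq_zero_iff, AddSubgroup.mem_zmultiples_iff]
    simp only [zsmul_eq_mul, eq_comm, mul_comm]
  refine (hπ _).mp ?_
  rw [map_sum]
  refine Finset.sum_involution (fun i _ => g i) (fun i hi => ?_) (fun i hi hne hgi => ?_) hg hgg
  · obtain ⟨n, hn⟩ := hf i hi
    rw [← map_add, hπ]
    rcases hfg i hi with h | h
    · exact ⟨n, by rw [h, hn]; ring⟩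
    · exact ⟨0, by rw [h]; ring⟩
  · obtain ⟨n, hn⟩ := hfix i hi hgi
    exact hne ((hπ _).mpr ⟨n, hn⟩)

namespace RootSystemData

variable {E : Type} [AddCommGroup E] [Module ℝ E] (D : RootSystemData E)

theorem ne_zero_of_mem_R {α : E} (hα : α ∈ D.R) : α ≠ 0 :=
  fun h => D.zero_not_mem (h ▸ hα)

theorem neg_notMem_Rpos {α : E} (hα : α ∈ D.Rpos) : -α ∉ D.Rpos :=
  (D.pos_iff α (D.rpos_subset hα)).mp hα

theorem mem_Rpos_or_neg_mem_Rpos {α : E} (hα : α ∈ D.R) : α ∈ D.Rpos ∨ -α ∈ D.Rpos := by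
  rw [D.pos_iff α hα]
  exact em' _

theorem symm_apply_mem_R {u : E ≃ₗ[ℝ] E} (hu : u ∈ D.W) {α : E} (hα : α ∈ D.R) :
    u.symm α ∈ D.R :=
  D.W_root_stable u⁻¹ (D.W.inv_mem hu) α hα

theorem reflection_mem_W {α : E} (hα : α ∈ D.R) :
    Module.reflection (D.coroot_self α hα) ∈ D.W := by
  rw [D.W_gen]
  exact Subgroup.subset_closure ⟨α, hα, fun _ => Module.reflection_apply ..⟩

theorem coroot_reflection {α : E} (hα : α ∈ D.R) (x : E) :
    D.coroot α (Module.reflection (D.coroot_self α hα) x) = -D.coroot α x := by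
  rw [Module.reflection_apply, map_sub, map_smul, D.coroot_self α hα, smul_eq_mul]
  ring

noncomputable def rootForm : LinearMap.BilinForm ℝ E :=
  ∑ β ∈ D.R, (D.coroot β).smulRight (D.coroot β)

theorem rootForm_apply (x y : E) :
    D.rootForm x y = ∑ β ∈ D.R, D.coroot β x * D.coroot β y := by
  simp [rootForm, LinearMap.sum_apply]

theorem rootForm_self_pos {x : E} (hx : x ≠ 0) : 0 < D.rootForm x x := by
  rw [rootForm_apply]
  obtain ⟨β, hβ, hβx⟩ : ∃ β ∈ D.R, D.coroot β x ≠ 0 := by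
    by_contra! h
    exact hx (D.nondeg x h)
  exact Finset.sum_pos' (fun β _ => mul_self_nonneg _) ⟨β, hβ, mul_self_pos.mpr hβx⟩

theorem rootForm_map {u : E ≃ₗ[ℝ] E} (hu : u ∈ D.W) (x y : E) :
    D.rootForm (u x) (u y) = D.rootForm x y := by
  rw [rootForm_apply, rootForm_apply]
  refine Finset.sum_nbij' u.symm u (fun _ => D.symm_apply_mem_R hu)
    (fun β hβ => D.W_root_stable u hu β hβ) (fun β _ => u.apply_symm_apply β)
    (fun β _ => u.symm_apply_apply β) (fun β _ => ?_)
  conv_lhs => rw [← u.apply_symm_apply β]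
  rw [D.W_equivariant u hu, D.W_equivariant u hu]

theorem coroot_mul_rootForm_self {α : E} (hα : α ∈ D.R) (x : E) :
    D.coroot α x * D.rootForm α α = 2 * D.rootForm x α := by
  have h := D.rootForm_map (D.reflection_mem_W hα) x α
  rw [Module.reflection_apply_self, Module.reflection_apply] at h
  simp only [map_sub, map_smul, map_neg, LinearMap.sub_apply, LinearMap.smul_apply,
    smul_eq_mul] at h
  linarith

theorem coroot_nonneg_iff {α : E} (hα : α ∈ D.R) (x : E) :
    0 ≤ D.coroot α x ↔ 0 ≤ D.rootForm x α := by
  rw [← mul_nonneg_iff_of_pos_right (D.rootForm_self_pos (D.ne_zero_of_mem_R hα)),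
    D.coroot_mul_rootForm_self hα]
  exact ⟨fun h => nonneg_of_mul_nonneg_right h two_pos, mul_nonneg zero_le_two⟩

theorem coroot_pos_iff {α : E} (hα : α ∈ D.R) (x : E) :
    0 < D.coroot α x ↔ 0 < D.rootForm x α := by
  rw [← mul_pos_iff_of_pos_right (D.rootForm_self_pos (D.ne_zero_of_mem_R hα)),
    D.coroot_mul_rootForm_self hα]
  exact ⟨fun h => pos_of_mul_pos_right h zero_le_two, mul_pos two_pos⟩

theorem coroot_neg_root {α : E} (hα : α ∈ D.R) (x : E) :
    D.coroot (-α) x = -D.coroot α x := by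
  have hneg := D.coroot_mul_rootForm_self (D.neg_mem α hα) x
  have h := D.coroot_mul_rootForm_self hα x
  simp only [map_neg, LinearMap.neg_apply, neg_neg] at hneg
  refine mul_right_cancel₀ (D.rootForm_self_pos (D.ne_zero_of_mem_R hα)).ne' ?_
  linarith

theorem coroot_nonneg_of_isDominant {μ : E} (hμ : D.IsDominant μ) {α : E} (hα : α ∈ D.Rpos) :
    0 ≤ D.coroot α μ := by
  rw [D.coroot_nonneg_iff (D.rpos_subset hα)]
  obtain ⟨c, rfl⟩ := D.pos_sum_simples α hα
  rw [map_sum]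
  refine Finset.sum_nonneg fun β hβ => ?_
  rw [map_smul, smul_eq_mul]
  exact mul_nonneg (Nat.cast_nonneg _)
    ((D.coroot_nonneg_iff (D.rpos_subset (D.simples_subset hβ)) μ).mp (hμ β hβ))

theorem coroot_rho_pos {α : E} (hα : α ∈ D.Rpos) : 0 < D.coroot α D.rho := by
  have hαR := D.rpos_subset hα
  rw [D.coroot_pos_iff hαR]
  obtain ⟨c, hc⟩ := D.pos_sum_simples α hα
  have hsimple : ∀ β ∈ D.simples, 0 < D.rootForm D.rho β := fun β hβ =>
    (D.coroot_pos_iff (D.rpos_subset (D.simples_subset hβ)) _).mp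
      (by rw [D.rho_simple β hβ]; exact one_pos)
  obtain ⟨β, hβ, hcβ⟩ : ∃ β ∈ D.simples, c β ≠ 0 := by
    by_contra! h
    exact D.ne_zero_of_mem_R hαR (hc.trans (Finset.sum_eq_zero fun β hβ => by simp [h β hβ]))
  rw [hc, map_sum]
  refine Finset.sum_pos' (fun γ hγ => ?_) ⟨β, hβ, ?_⟩ <;> rw [map_smul, smul_eq_mul]
  · exact mul_nonneg (Nat.cast_nonneg _) (hsimple γ hγ).le
  · exact mul_pos (Nat.cast_pos.mpr (Nat.pos_of_ne_zero hcβ)) (hsimple β hβ)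

theorem coroot_le_of_isRestricted {μ : E} (hμ : D.IsRestricted μ) {α : E} (hα : α ∈ D.Rpos) :
    D.coroot α μ ≤ (D.p - 1) * D.coroot α D.rho := by
  have hdom : D.IsDominant (((D.p : ℝ) - 1) • D.rho - μ) := fun β hβ => by
    rw [map_sub, map_smul, smul_eq_mul, D.rho_simple β hβ, mul_one, sub_nonneg]
    exact hμ β hβ
  have h := D.coroot_nonneg_of_isDominant hdom hα
  rwa [map_sub, map_smul, smul_eq_mul, sub_nonneg] at h

open Classical in
noncomputable def posRep (β : E) : E := if β ∈ D.Rpos then β else -β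

theorem posRep_eq_or (β : E) : D.posRep β = β ∨ D.posRep β = -β := by
  unfold posRep
  split_ifs <;> simp

theorem posRep_of_mem_Rpos {β : E} (hβ : β ∈ D.Rpos) : D.posRep β = β := if_pos hβ

theorem posRep_mem_Rpos {β : E} (hβ : β ∈ D.R) : D.posRep β ∈ D.Rpos := by
  unfold posRep
  split_ifs with h
  · exact h
  · exact (D.mem_Rpos_or_neg_mem_Rpos hβ).resolve_left h

theorem posRep_neg {β : E} (hβ : β ∈ D.R) : D.posRep (-β) = D.posRep β := by
  rcases D.mem_Rpos_or_neg_mem_Rpos hβ with h | h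
  · rw [posRep_of_mem_Rpos D h, posRep, if_neg (D.neg_notMem_Rpos h), neg_neg]
  · rw [posRep_of_mem_Rpos D h, posRep, if_neg fun h' => D.neg_notMem_Rpos h' h]

theorem exists_int_coroot_rho {α : E} (hα : α ∈ D.R) : ∃ m : ℤ, D.coroot α D.rho = m := by
  set s := Module.reflection (D.coroot_self α hα)
  have hsR : ∀ β ∈ D.R, s β ∈ D.R := fun β hβ => by
    rw [Module.reflection_apply]
    exact D.reflection_mem α hα β hβ
  -- `β ↦ ±s_α β`, the sign chosen to land in `R⁺`, is an involution of `R⁺` preserving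
  -- `⟨β, α∨⟩` up to sign; its fixed points are `α` (by reducedness, `⟨α, α∨⟩ = 2`) and the
  -- roots orthogonal to `α`, so `∑_{β ∈ R⁺} ⟨β, α∨⟩ = ⟨2ρ, α∨⟩` is even
  have hmem : ∀ β ∈ D.Rpos, D.posRep (s β) ∈ D.Rpos := fun β hβ =>
    D.posRep_mem_Rpos (hsR β (D.rpos_subset hβ))
  have hinv : ∀ β ∈ D.Rpos, D.posRep (s (D.posRep (s β))) = β := fun β hβ => by
    have hss : s (s β) = β := Module.involutive_reflection _ β
    rcases D.posRep_eq_or (s β) with h | h <;> rw [h]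
    · rw [hss, D.posRep_of_mem_Rpos hβ]
    · rw [map_neg, hss, D.posRep_neg (D.rpos_subset hβ), D.posRep_of_mem_Rpos hβ]
  have hcoroot : ∀ β ∈ D.Rpos, D.coroot α (D.posRep (s β)) = D.coroot α β ∨
      D.coroot α (D.posRep (s β)) = -D.coroot α β := fun β _ => by
    rcases D.posRep_eq_or (s β) with h | h <;> rw [h]
    · exact Or.inr (D.coroot_reflection hα β)
    · exact Or.inl (by rw [map_neg, D.coroot_reflection hα, neg_neg])
  have hfix : ∀ β ∈ D.Rpos, D.posRep (s β) = β → ∃ n : ℤ, D.coroot α β = 2 * n := by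
    intro β hβ hβfix
    rcases D.posRep_eq_or (s β) with h | h <;>
      rw [hβfix, eq_comm, Module.reflection_apply] at h
    · rw [sub_eq_self, smul_eq_zero] at h
      exact ⟨0, by simpa using h.resolve_right (D.ne_zero_of_mem_R hα)⟩
    · have hβR : (2⁻¹ * D.coroot α β) • α ∈ D.R := by
        convert D.rpos_subset hβ using 1
        rw [mul_smul]
        linear_combination (norm := module) (2⁻¹ : ℝ) • h
      rcases D.reduced α hα _ hβR with h1 | h1
      · exact ⟨1, by push_cast; linarith⟩
      · exact ⟨-1, by push_cast; linarith⟩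
  obtain ⟨m, hm⟩ := exists_sum_eq_two_mul_of_involution D.Rpos (D.coroot α)
    (fun β => D.posRep (s β)) (fun β hβ => D.crystallographic α hα β (D.rpos_subset hβ))
    hmem hinv hcoroot hfix
  refine ⟨m, ?_⟩
  have h2ρ := congrArg (D.coroot α) D.rho_def
  rw [map_smul, smul_eq_mul, map_sum, hm] at h2ρ
  linarith

theorem coroot_dotZero {v : E ≃ₗ[ℝ] E} (hv : v ∈ D.W) (α lam : E) :
    D.coroot α (D.dotZero v lam) =
      D.coroot (v.symm α) D.rho - D.coroot α D.rho + D.p * D.coroot α lam := by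
  have h := D.W_equivariant v hv (v.symm α) D.rho
  rw [v.apply_symm_apply] at h
  rw [dotZero, map_add, map_sub, map_smul, smul_eq_mul, h]

theorem mul_coroot_bounds_of_inW0 {v : E ≃ₗ[ℝ] E} {lam : E} (h : D.InW0 v lam) {α : E}
    (hα : α ∈ D.Rpos) :
    D.coroot α D.rho - D.coroot (v.symm α) D.rho ≤ D.p * D.coroot α lam ∧
      D.p * D.coroot α lam ≤ D.p * D.coroot α D.rho - D.coroot (v.symm α) D.rho := by
  obtain ⟨hv, -, hdom, hres⟩ := h
  have hlow := D.coroot_nonneg_of_isDominant hdom hα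
  have hupp := D.coroot_le_of_isRestricted hres hα
  rw [D.coroot_dotZero hv] at hlow hupp
  constructor <;> linarith

theorem coroot_lam_bounds_of_symm_mem_Rpos {v : E ≃ₗ[ℝ] E} {lam α : E} (h : D.InW0 v lam)
    (hα : α ∈ D.Rpos) (hv : v.symm α ∈ D.Rpos) :
    0 ≤ D.coroot α lam ∧ D.coroot α lam < D.coroot α D.rho := by
  obtain ⟨n, hn⟩ := h.2.1 α (D.rpos_subset hα)
  obtain ⟨hlow, hupp⟩ := D.mul_coroot_bounds_of_inW0 h hα
  have hp : (0 : ℝ) < D.p := by exact_mod_cast D.p_pos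
  have hρ := D.coroot_rho_pos hα
  have hc := D.coroot_rho_pos hv
  have hcp := D.p_gt _ hv
  have hgt : D.p * (-1 : ℝ) < D.p * D.coroot α lam := by linarith
  replace hgt : -1 < n := by exact_mod_cast hn ▸ lt_of_mul_lt_mul_left hgt hp.le
  refine ⟨by rw [hn]; exact_mod_cast (by omega : 0 ≤ n), ?_⟩
  exact lt_of_mul_lt_mul_left (by linarith) hp.le

theorem coroot_lam_bounds_of_neg_symm_mem_Rpos {v : E ≃ₗ[ℝ] E} {lam α : E} (h : D.InW0 v lam)
    (hα : α ∈ D.Rpos) (hv : -(v.symm α) ∈ D.Rpos) :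
    0 < D.coroot α lam ∧ D.coroot α lam ≤ D.coroot α D.rho := by
  obtain ⟨n, hn⟩ := h.2.1 α (D.rpos_subset hα)
  obtain ⟨m, hm⟩ := D.exists_int_coroot_rho (D.rpos_subset hα)
  obtain ⟨hlow, hupp⟩ := D.mul_coroot_bounds_of_inW0 h hα
  have hp : (0 : ℝ) < D.p := by exact_mod_cast D.p_pos
  have hρ := D.coroot_rho_pos hα
  have hc := D.coroot_rho_pos hv
  have hcp := D.p_gt _ hv
  rw [D.coroot_neg_root (D.symm_apply_mem_R h.1 (D.rpos_subset hα))] at hc hcp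
  have hlt : D.p * D.coroot α lam < D.p * (D.coroot α D.rho + 1) := by linarith
  replace hlt : n < m + 1 := by exact_mod_cast hn ▸ hm ▸ lt_of_mul_lt_mul_left hlt hp.le
  refine ⟨pos_of_mul_pos_right (by linarith) hp.le, ?_⟩
  rw [hn, hm]
  exact_mod_cast (by omega : n ≤ m)

end RootSystemData

theorem statement5_general {E : Type} [AddCommGroup E] [Module ℝ E]
    (D : RootSystemData E) (v : E ≃ₗ[ℝ] E) (lam : E) (h : D.InW0 v lam) :
    ∀ α ∈ D.Rpos,
      (0 ≤ D.coroot α lam ∧ D.coroot α lam ≤ D.coroot α D.rho) ∧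
      (v.symm α ∈ D.Rpos → D.coroot α lam < D.coroot α D.rho) ∧
      (-(v.symm α) ∈ D.Rpos → 0 < D.coroot α lam) := by
  intro α hα
  rcases D.mem_Rpos_or_neg_mem_Rpos (D.symm_apply_mem_R h.1 (D.rpos_subset hα)) with hv | hv
  · obtain ⟨hnonneg, hlt⟩ := D.coroot_lam_bounds_of_symm_mem_Rpos h hα hv
    exact ⟨⟨hnonneg, hlt.le⟩, fun _ => hlt, fun hv' => (D.neg_notMem_Rpos hv hv').elim⟩
  · obtain ⟨hpos, hle⟩ := D.coroot_lam_bounds_of_neg_symm_mem_Rpos h hα hv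
    exact ⟨⟨hpos.le, hle⟩, fun hv' => (D.neg_notMem_Rpos hv' hv).elim, fun _ => hpos⟩

/-- Let `w = t_lam · v ∈ W⁰` (`lam ∈ X`, `v ∈ W`).  Then for every
positive root `α ∈ R⁺` one has `0 ≤ ⟨lam,α∨⟩ ≤ ⟨ρ,α∨⟩`; moreover the second inequality
is strict if `v⁻¹ α ∈ R⁺`, and the first one is strict if `v⁻¹ α ∈ R⁻`. -/
theorem statement5 {E : Type} [AddCommGroup E] [Module ℝ E] [DecidableEq E]
    (D : RootSystemData E) (v : E ≃ₗ[ℝ] E) (lam : E) (h : D.InW0 v lam) :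
    ∀ α ∈ D.Rpos,
      (0 ≤ D.coroot α lam ∧ D.coroot α lam ≤ D.coroot α D.rho) ∧
      (v.symm α ∈ D.Rpos → D.coroot α lam < D.coroot α D.rho) ∧
      (-(v.symm α) ∈ D.Rpos → 0 < D.coroot α lam) :=
  statement5_general D v lam h
end

section
/- For every finitely generated graded A-module M, the intersection ⋂_{i≥0} rad^{gr,i}(M) is zero; equivalently, ⋂_{i≥0} (rad^gr(A))^i·M = {0}. -/
/-- A submodule `N` of a graded module `M = ⊕ₙ Mₙ` (with grading `gM : ℤ → Submodule k M`)
is *graded* (homogeneous) if it is generated, as an `A`-module, by its homogeneous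
elements; equivalently (for modules with a decomposition) `N = ⊕ₙ (N ∩ Mₙ)`. -/
def IsGradedSubmodule {k A M : Type} [Semiring k] [Ring A]
    [AddCommGroup M] [Module A M] [Module k M]
    (gM : ℤ → Submodule k M) (N : Submodule A M) : Prop :=
  N = Submodule.span A (⋃ n : ℤ, ((N : Set M) ∩ (gM n : Set M)))

/-- A *maximal graded submodule*: a proper graded submodule which is maximal among
proper graded submodules. -/
def IsMaxGradedSubmodule {k A M : Type} [Semiring k] [Ring A]
    [AddCommGroup M] [Module A M] [Module k M]
    (gM : ℤ → Submodule k M) (N : Submodule A M) : Prop :=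
  IsGradedSubmodule gM N ∧ N ≠ ⊤ ∧
    ∀ N' : Submodule A M, IsGradedSubmodule gM N' → N < N' → N' = ⊤

/-- The graded radical `rad^gr(M)` of a graded module: the intersection of all maximal
graded submodules. -/
def gradedRadicalMod {k A M : Type} [Semiring k] [Ring A]
    [AddCommGroup M] [Module A M] [Module k M]
    (gM : ℤ → Submodule k M) : Submodule A M :=
  sInf {N : Submodule A M | IsMaxGradedSubmodule gM N}

/-- The graded radical `rad^gr(A)` of a graded algebra: the intersection of all
maximal graded left ideals. -/
def gradedRadical {k A : Type} [Semiring k] [Ring A] [Module k A]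
    (gA : ℤ → Submodule k A) : Ideal A :=
  gradedRadicalMod gA

/-!
Let `J = rad^gr(A)` and let `I` be the ideal generated by the homogeneous elements of `φ(V)`:
it is homogeneous, two-sided because its generators are central, and `A / I` is
finite-dimensional because `S(V)` acts on it through `k`. The graded radical kills every
graded-simple subquotient `D / N` of `A` (for homogeneous `d ∈ D ∖ N` the colon ideal `N : d`
is a maximal graded left ideal), which gives a graded Nakayama lemma; applied to the stable value
of the descending chain `I + J^p` in the finite-length module `A / I` it yields `J^n ⊆ I`.
The generators of `I` have positive degree and `A`, `M` are bounded below, so `J^(n l) M` lies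
in degrees `≥ l + const`; an element of every `J^i M` therefore has no nonzero components.
-/

open DirectSum SetLike

theorem Submodule.map_mkQ_lt_map_mkQ {R M : Type*} [Ring R] [AddCommGroup M] [Module R M]
    {p X Y : Submodule R M} (hpX : p ≤ X) (hXY : X < Y) : X.map p.mkQ < Y.map p.mkQ := by
  refine lt_of_le_of_ne (Submodule.map_mono hXY.le) fun h => hXY.ne ?_
  have h' := congrArg (Submodule.comap p.mkQ) h
  rwa [Submodule.comap_map_mkQ, Submodule.comap_map_mkQ, sup_eq_right.mpr hpX,
    sup_eq_right.mpr (hpX.trans hXY.le)] at h'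

section IdealArithmetic

variable {k A : Type*} [CommSemiring k] [Semiring A] [Algebra k A]

theorem Ideal.isTwoSided_span_of_commute {S : Set A} (hS : ∀ s ∈ S, ∀ a : A, Commute s a) :
    (Ideal.span S).IsTwoSided := by
  refine ⟨fun b hx => ?_⟩
  induction hx using Submodule.span_induction with
  | mem s hs => rw [(hS s hs b).eq]; exact Ideal.mul_mem_left _ b (Ideal.subset_span hs)
  | zero => simp
  | add x y _ _ hx hy => rw [add_mul]; exact add_mem hx hy
  | smul a x _ hx => rw [smul_mul_assoc]; exact Submodule.smul_mem _ a hx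

theorem Ideal.restrictScalars_pow_le (J : Ideal A) (i : ℕ) :
    J.restrictScalars k ^ i ≤ (J ^ i).restrictScalars k := by
  induction i with
  | zero =>
    rw [Submodule.pow_zero, Submodule.pow_zero, Ideal.one_eq_top, Submodule.restrictScalars_top]
    exact le_top
  | succ i ih =>
    rw [Submodule.pow_succ, Submodule.pow_succ]
    exact Submodule.mul_le.mpr fun r hr s hs => Ideal.mul_mem_mul (ih hr) hs

theorem Ideal.pow_mul_le_pow {I J : Ideal A} [J.IsTwoSided] {n : ℕ} (h : J ^ n ≤ I) (l : ℕ) :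
    J ^ (n * l) ≤ I ^ l := by
  induction l with
  | zero => rw [Nat.mul_zero, Submodule.pow_zero, Submodule.pow_zero]
  | succ l ih =>
    rw [Nat.mul_succ, Ideal.IsTwoSided.pow_add, Submodule.pow_succ]
    exact Ideal.mul_mono ih h

end IdealArithmetic

theorem finite_quotient_of_forall_mem_span {k A : Type*} [CommSemiring k] [Ring A] [Algebra k A]
    {I : Ideal A} [I.IsTwoSided] {T : Set A} (hT : T ⊆ I) (s : Finset A)
    (hs : ∀ a : A, a ∈ Submodule.span k {x : A | ∃ c ∈ Algebra.adjoin k T, ∃ t ∈ s, x = c * t}) :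
    Module.Finite k (A ⧸ I) := by
  classical
  have hadj : Algebra.adjoin k T ≤ (⊥ : Subalgebra k (A ⧸ I)).comap (Ideal.Quotient.mkₐ k I) :=
    Algebra.adjoin_le fun t ht => ⟨0, by simp [Ideal.Quotient.eq_zero_iff_mem.mpr (hT ht)]⟩
  refine ⟨⟨s.image (Ideal.Quotient.mkₐ k I), Submodule.eq_top_iff'.mpr fun y => ?_⟩⟩
  obtain ⟨a, rfl⟩ := Ideal.Quotient.mkₐ_surjective k I y
  induction hs a using Submodule.span_induction with
  | mem x hx =>
    obtain ⟨c, hc, t, ht, rfl⟩ := hx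
    obtain ⟨r, hr⟩ : ∃ r, algebraMap k _ r = Ideal.Quotient.mkₐ k I c := hadj hc
    rw [map_mul, ← hr, ← Algebra.smul_def]
    exact Submodule.smul_mem _ r (Submodule.subset_span (Finset.mem_image_of_mem _ ht))
  | zero => simp
  | add x y _ _ hx hy => rw [map_add]; exact add_mem hx hy
  | smul r x _ hx => rw [map_smul]; exact Submodule.smul_mem _ r hx

section GradedLeftIdeal

variable {k A : Type} [Semiring k] [Ring A] [Module k A] {gA : ℤ → Submodule k A}

theorem gradedRadical_le {L : Ideal A} (hL : IsMaxGradedSubmodule gA L) : gradedRadical gA ≤ L :=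
  sInf_le hL

variable (gA) [GradedRing gA]

theorem isGradedSubmodule_iff_isHomogeneous {N : Ideal A} :
    IsGradedSubmodule gA N ↔ N.IsHomogeneous gA := by
  classical
  constructor
  · intro h
    rw [h]
    refine Ideal.homogeneous_span gA _ fun x hx => ?_
    obtain ⟨n, -, hn⟩ := Set.mem_iUnion.mp hx
    exact ⟨n, hn⟩
  · intro h
    refine le_antisymm (fun x hx => ?_) (Submodule.span_le.mpr fun x hx => ?_)
    · rw [← sum_support_decompose gA x]
      exact sum_mem fun n _ => Submodule.subset_span
        (Set.mem_iUnion.mpr ⟨n, h n hx, (decompose gA x n).2⟩)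
    · obtain ⟨n, hxN, -⟩ := Set.mem_iUnion.mp hx
      exact hxN

theorem isMaxGradedSubmodule_iff {N : Ideal A} :
    IsMaxGradedSubmodule gA N ↔ N.IsHomogeneous gA ∧ N ≠ ⊤ ∧
      ∀ X : Ideal A, X.IsHomogeneous gA → N < X → X = ⊤ := by
  simp only [IsMaxGradedSubmodule, isGradedSubmodule_iff_isHomogeneous]

variable {gA}

theorem Ideal.IsHomogeneous.mul' {I J : Ideal A} (hI : I.IsHomogeneous gA)
    (hJ : J.IsHomogeneous gA) : (I * J).IsHomogeneous gA := by
  classical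
  rw [Ideal.IsHomogeneous.iff_eq]
  refine le_antisymm (Ideal.toIdeal_homogeneousCore_le _ _) (Ideal.mul_le.mpr fun r hr s hs => ?_)
  rw [← sum_support_decompose gA r, ← sum_support_decompose gA s, Finset.sum_mul_sum]
  exact Ideal.sum_mem _ fun i _ => Ideal.sum_mem _ fun j _ =>
    Ideal.mem_homogeneousCore_of_homogeneous_of_mem
      ⟨i + j, mul_mem_graded (decompose gA r i).2 (decompose gA s j).2⟩
      (Ideal.mul_mem_mul (hI i hr) (hJ j hs))

theorem Ideal.IsHomogeneous.pow {I : Ideal A} (hI : I.IsHomogeneous gA) (n : ℕ) :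
    (I ^ n).IsHomogeneous gA := by
  induction n with
  | zero => rw [Submodule.pow_zero, Ideal.one_eq_top]; exact Ideal.IsHomogeneous.top gA
  | succ n ih => rw [Submodule.pow_succ]; exact ih.mul' hI

theorem Ideal.IsHomogeneous.colon_singleton {N : Ideal A} (hN : N.IsHomogeneous gA) {d : A}
    {δ : ℤ} (hd : d ∈ gA δ) : (N.colon {d}).IsHomogeneous gA := by
  intro i c hc
  rw [Submodule.mem_colon_singleton, smul_eq_mul] at hc ⊢
  rw [← coe_decompose_mul_add_of_right_mem gA hd]
  exact hN (i + δ) hc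

theorem Ideal.IsHomogeneous.map_toSpanSingleton {L : Ideal A} (hL : L.IsHomogeneous gA) {d : A}
    {δ : ℤ} (hd : d ∈ gA δ) :
    (Submodule.map (LinearMap.toSpanSingleton A A d) L).IsHomogeneous gA := by
  rintro i _ ⟨c, hc, rfl⟩
  have h := coe_decompose_mul_add_of_right_mem gA (a := c) (i := i - δ) hd
  rw [sub_add_cancel] at h
  exact ⟨_, hL (i - δ) hc, by simp only [LinearMap.toSpanSingleton_apply, smul_eq_mul, h]⟩

/-- For homogeneous `d ∈ D ∖ N`, where `D / N` is graded-simple, right multiplication by `d`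
identifies `A / (N : d)` with a shift of `D / N`, so `N : d` is a maximal graded left ideal. -/
theorem isMaxGradedSubmodule_colon {N D : Ideal A} (hN : N.IsHomogeneous gA) (hND : N ≤ D)
    (hmax : ∀ X : Ideal A, X.IsHomogeneous gA → N < X → X ≤ D → X = D) {d : A} {δ : ℤ}
    (hd : d ∈ gA δ) (hdD : d ∈ D) (hdN : d ∉ N) : IsMaxGradedSubmodule gA (N.colon {d}) := by
  rw [isMaxGradedSubmodule_iff]
  refine ⟨hN.colon_singleton hd, fun h => hdN ?_, fun L hL hlt => ?_⟩
  · simpa using (h ▸ Submodule.mem_top : (1 : A) ∈ N.colon {d})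
  set X := N ⊔ Submodule.map (LinearMap.toSpanSingleton A A d) L
  have hX : X.IsHomogeneous gA := hN.sup (hL.map_toSpanSingleton hd)
  have hNX : N < X := by
    obtain ⟨c, hcL, hc⟩ := SetLike.exists_of_lt hlt
    refine SetLike.lt_iff_le_and_exists.mpr ⟨le_sup_left, c * d, ?_, ?_⟩
    · exact Submodule.mem_sup_right ⟨c, hcL, rfl⟩
    · simpa using hc
  have hXD : X ≤ D := by
    refine sup_le hND ?_
    rintro _ ⟨c, -, rfl⟩
    exact D.smul_mem c hdD
  obtain ⟨y, hy, _, ⟨c, hc, rfl⟩, hyc⟩ :=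
    Submodule.mem_sup.mp ((hmax X hX hNX hXD).symm ▸ hdD)
  have hc' : 1 - c ∈ N.colon {d} := by
    rw [LinearMap.toSpanSingleton_apply] at hyc
    rw [Submodule.mem_colon_singleton, sub_smul, one_smul, sub_eq_of_eq_add hyc.symm]
    exact hy
  rw [Ideal.eq_top_iff_one]
  simpa using L.add_mem (hlt.le hc') hc

theorem gradedRadical_mul_le {N D : Ideal A} (hD : D.IsHomogeneous gA) (hN : N.IsHomogeneous gA)
    (hND : N ≤ D) (hmax : ∀ X : Ideal A, X.IsHomogeneous gA → N < X → X ≤ D → X = D) :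
    gradedRadical gA * D ≤ N := by
  classical
  refine Ideal.mul_le.mpr fun j hj d hd => ?_
  rw [← sum_support_decompose gA d, Finset.mul_sum]
  refine Ideal.sum_mem _ fun δ _ => ?_
  by_cases hδ : (decompose gA d δ : A) ∈ N
  · exact N.mul_mem_left j hδ
  · have hcolon := isMaxGradedSubmodule_colon hN hND hmax (decompose gA d δ).2 (hD δ hd) hδ
    simpa using gradedRadical_le hcolon hj

variable (gA) in
theorem isHomogeneous_gradedRadical : (gradedRadical gA).IsHomogeneous gA :=
  Ideal.IsHomogeneous.sInf fun _ hL => ((isMaxGradedSubmodule_iff gA).mp hL).1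

variable (gA) in
theorem isTwoSided_gradedRadical : (gradedRadical gA).IsTwoSided := by
  refine ⟨fun b hj => Submodule.mem_sInf.mpr fun L hL => ?_⟩
  obtain ⟨hLh, -, hLmax⟩ := (isMaxGradedSubmodule_iff gA).mp hL
  exact gradedRadical_mul_le (Ideal.IsHomogeneous.top gA) hLh le_top
    (fun X hX hlt _ => hLmax X hX hlt) (Ideal.mul_mem_mul hj Submodule.mem_top)

theorem exists_maximal_isHomogeneous_between {I D : Ideal A} [IsNoetherian A (A ⧸ I)]
    (hI : I.IsHomogeneous gA) (hID : I < D) :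
    ∃ N : Ideal A, N.IsHomogeneous gA ∧ I ≤ N ∧ N < D ∧
      ∀ X : Ideal A, X.IsHomogeneous gA → N < X → X ≤ D → X = D := by
  set S := {X : Ideal A | X.IsHomogeneous gA ∧ I ≤ X ∧ X < D}
  obtain ⟨_, ⟨N, ⟨hN, hIN, hND⟩, rfl⟩, hNmax⟩ := set_has_maximal_iff_noetherian.mpr ‹_›
    (Submodule.map I.mkQ '' S) ⟨_, I, ⟨hI, le_rfl, hID⟩, rfl⟩
  refine ⟨N, hN, hIN, hND, fun X hX hNX hXD => by_contra fun hne => ?_⟩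
  exact hNmax _ ⟨X, ⟨hX, hIN.trans hNX.le, lt_of_le_of_ne hXD hne⟩, rfl⟩
    (Submodule.map_mkQ_lt_map_mkQ hIN hNX)

/-- The graded Nakayama lemma. -/
theorem le_of_le_sup_gradedRadical_mul {I D : Ideal A} [IsNoetherian A (A ⧸ I)]
    (hI : I.IsHomogeneous gA) (hD : D.IsHomogeneous gA) (h : D ≤ I ⊔ gradedRadical gA * D) :
    D ≤ I := by
  by_contra hDI
  obtain ⟨N, hN, hIN, hND, hmax⟩ :=
    exists_maximal_isHomogeneous_between hI (left_lt_sup.mpr hDI : I < I ⊔ D)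
  have hJN := gradedRadical_mul_le (hI.sup hD) hN hND.le hmax
  exact hND.not_ge (sup_le hIN (h.trans (sup_le hIN
    ((Ideal.mul_mono_right le_sup_right).trans hJN))))

theorem exists_gradedRadical_pow_le {I : Ideal A} [IsNoetherian A (A ⧸ I)]
    [IsArtinian A (A ⧸ I)] (hI : I.IsHomogeneous gA) : ∃ n, gradedRadical gA ^ n ≤ I := by
  have := isTwoSided_gradedRadical gA
  set J := gradedRadical gA
  obtain ⟨n, hn⟩ := IsArtinian.monotone_stabilizes
    ⟨fun p => OrderDual.toDual (Submodule.map I.mkQ (J ^ p)),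
      fun p q hpq => Submodule.map_mono (Ideal.pow_le_pow_right hpq)⟩
  have hstab : I ⊔ J ^ n = I ⊔ J ^ (n + 1) := by
    have h : Submodule.map I.mkQ (J ^ n) = Submodule.map I.mkQ (J ^ (n + 1)) :=
      hn (n + 1) n.le_succ
    simpa only [Submodule.comap_map_mkQ] using congrArg (Submodule.comap I.mkQ) h
  refine ⟨n, le_of_le_sup_gradedRadical_mul hI ((isHomogeneous_gradedRadical gA).pow n) ?_⟩
  rw [← Ideal.IsTwoSided.pow_succ, ← hstab]
  exact le_sup_right

end GradedLeftIdeal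

section DegreeFiltration

variable {k M : Type*} [Semiring k] [AddCommMonoid M] [Module k M] (gM : ℤ → Submodule k M)

def degreeGE (b : ℤ) : Submodule k M := ⨆ (n : ℤ) (_ : b ≤ n), gM n

theorem degreeGE_antitone : Antitone (degreeGE gM) :=
  fun _ _ h => iSup₂_mono' fun n hn => ⟨n, h.trans hn, le_rfl⟩

theorem le_degreeGE {b n : ℤ} (h : b ≤ n) : gM n ≤ degreeGE gM b :=
  le_iSup₂_of_le n h le_rfl

@[elab_as_elim]
theorem degreeGE_induction {b : ℤ} {motive : M → Prop} {x : M} (hx : x ∈ degreeGE gM b)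
    (mem : ∀ n, b ≤ n → ∀ y ∈ gM n, motive y) (zero : motive 0)
    (add : ∀ y z, motive y → motive z → motive (y + z)) : motive x :=
  Submodule.iSup_induction (motive := motive) _ hx (fun n _ hy =>
    Submodule.iSup_induction (motive := motive) _ hy (fun h y hy => mem n h y hy) zero add)
    zero add

section Decomposition

variable [DirectSum.Decomposition gM]

theorem exists_mem_degreeGE (x : M) : ∃ b, x ∈ degreeGE gM b := by
  induction x using DirectSum.Decomposition.inductionOn gM with
  | zero => exact ⟨0, zero_mem _⟩
  | homogeneous m => exact ⟨_, le_degreeGE gM le_rfl m.2⟩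
  | add x y hx hy =>
    obtain ⟨b, hb⟩ := hx
    obtain ⟨c, hc⟩ := hy
    exact ⟨min b c, add_mem (degreeGE_antitone gM (min_le_left b c) hb)
      (degreeGE_antitone gM (min_le_right b c) hc)⟩

theorem exists_forall_mem_degreeGE (s : Finset M) : ∃ b, ∀ x ∈ s, x ∈ degreeGE gM b := by
  choose f hf using exists_mem_degreeGE gM
  obtain ⟨b, hb⟩ := (s.image f).bddBelow
  exact ⟨b, fun x hx => degreeGE_antitone gM (hb (Finset.mem_image_of_mem f hx)) (hf x)⟩

theorem decompose_eq_zero_of_mem_degreeGE {b e : ℤ} {x : M} (hx : x ∈ degreeGE gM b)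
    (he : e < b) : (decompose gM x e : M) = 0 := by
  refine degreeGE_induction gM hx (fun n hn y hy => decompose_of_mem_ne gM hy (by omega))
    (by simp) fun y z hy hz => ?_
  rw [decompose_add, DirectSum.add_apply, AddMemClass.coe_add, hy, hz, add_zero]

theorem eq_zero_of_forall_mem_degreeGE {x : M} (h : ∀ b, x ∈ degreeGE gM b) : x = 0 := by
  classical
  rw [← sum_support_decompose gM x]
  exact Finset.sum_eq_zero fun e _ =>
    decompose_eq_zero_of_mem_degreeGE gM (h (e + 1)) (lt_add_one e)

end Decomposition

section GradedSMul

variable {A : Type*} [Semiring A] [Module k A] (gA : ℤ → Submodule k A) [Module A M]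
  [SetLike.GradedSMul gA gM]

theorem smul_mem_degreeGE {a : A} {x : M} {b c : ℤ} (ha : a ∈ degreeGE gA b)
    (hx : x ∈ degreeGE gM c) : a • x ∈ degreeGE gM (b + c) := by
  refine degreeGE_induction gA ha (fun n hn a ha => ?_) (by simp)
    fun a a' ha ha' => by rw [add_smul]; exact add_mem ha ha'
  refine degreeGE_induction gM hx (fun m hm y hy => ?_) (by simp)
    fun y z hy hz => by rw [smul_add]; exact add_mem hy hz
  exact le_degreeGE gM (show b + c ≤ n + m by omega) (SetLike.GradedSMul.smul_mem ha hy)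

theorem span_subset_degreeGE {b c : ℤ} (hA : ∀ a : A, a ∈ degreeGE gA b) {S : Set M}
    (hS : S ⊆ degreeGE gM c) {x : M} (hx : x ∈ Submodule.span A S) :
    x ∈ degreeGE gM (b + c) := by
  suffices ∀ a : A, a • x ∈ degreeGE gM (b + c) by simpa using this 1
  induction hx using Submodule.span_induction with
  | mem y hy => exact fun a => smul_mem_degreeGE gM gA (hA a) (hS hy)
  | zero => simp
  | add y z _ _ hy hz => exact fun a => by rw [smul_add]; exact add_mem (hy a) (hz a)
  | smul a' y _ hy => exact fun a => by rw [smul_smul]; exact hy (a * a')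

variable [DirectSum.Decomposition gM]

theorem iInf_span_smul_eq_bot {P : ℕ → Set A} (hP : ∀ b, ∃ i, P i ⊆ degreeGE gA b) {bA bM : ℤ}
    (hA : ∀ a : A, a ∈ degreeGE gA bA) (hM : ∀ m : M, m ∈ degreeGE gM bM) :
    ⨅ i, Submodule.span A {x : M | ∃ a ∈ P i, ∃ m : M, x = a • m} = ⊥ := by
  refine eq_bot_iff.mpr fun x hx =>
    (Submodule.mem_bot A).mpr (eq_zero_of_forall_mem_degreeGE gM fun b => ?_)
  obtain ⟨i, hi⟩ := hP (b - bA - bM)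
  have hS : {x : M | ∃ a ∈ P i, ∃ m : M, x = a • m} ⊆ degreeGE gM (b - bA) := by
    rintro _ ⟨a, ha, m, rfl⟩
    simpa using smul_mem_degreeGE gM gA (hi ha) (hM m)
  simpa using span_subset_degreeGE gM gA hA hS ((Submodule.mem_iInf _).mp hx i)

end GradedSMul

end DegreeFiltration

section BoundedBelow

variable {k A : Type*} [CommSemiring k] [Ring A] [Algebra k A] (gA : ℤ → Submodule k A)
  [GradedAlgebra gA]

theorem exists_forall_mem_degreeGE_of_forall_mem_span {T : Set A} (hT : T ⊆ degreeGE gA 0)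
    (s : Finset A)
    (hs : ∀ a : A, a ∈ Submodule.span k {x : A | ∃ c ∈ Algebra.adjoin k T, ∃ t ∈ s, x = c * t}) :
    ∃ b, ∀ a : A, a ∈ degreeGE gA b := by
  obtain ⟨b, hb⟩ := exists_forall_mem_degreeGE gA s
  have hadj : ∀ c ∈ Algebra.adjoin k T, c ∈ degreeGE gA 0 := fun c hc => by
    induction hc using Algebra.adjoin_induction with
    | mem x hx => exact hT hx
    | algebraMap r => exact le_degreeGE gA le_rfl (SetLike.algebraMap_mem_graded gA r)
    | add x y _ _ hx hy => exact add_mem hx hy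
    | mul x y _ _ hx hy => simpa using smul_mem_degreeGE gA gA hx hy
  refine ⟨b, fun a => (Submodule.span_le.mpr ?_) (hs a)⟩
  rintro _ ⟨c, hc, t, ht, rfl⟩
  simpa using smul_mem_degreeGE gA gA (hadj c hc) (hb t ht)

theorem span_pow_subset_degreeGE {S : Set A} [(Ideal.span S).IsTwoSided]
    (hS : ∀ s ∈ S, ∀ a : A, Commute s a) (hS1 : S ⊆ degreeGE gA 1) {b : ℤ}
    (hA : ∀ a : A, a ∈ degreeGE gA b) (l : ℕ) :
    ((Ideal.span S ^ l : Ideal A) : Set A) ⊆ degreeGE gA (b + l) := by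
  induction l with
  | zero => exact fun x _ => by simpa using hA x
  | succ l ih =>
    intro x hx
    rw [SetLike.mem_coe, Submodule.pow_succ] at hx
    refine Submodule.smul_induction_on hx (fun r hr s hs => ?_) fun _ _ => add_mem
    induction hs using Submodule.span_induction generalizing r with
    | mem g hg =>
      rw [smul_eq_mul, ← (hS g hg r).eq]
      exact degreeGE_antitone gA (by push_cast; omega) (smul_mem_degreeGE gA gA (hS1 hg) (ih hr))
    | zero => simp
    | add s s' _ _ hs hs' => rw [smul_add]; exact add_mem (hs r hr) (hs' r hr)
    | smul a s _ hs =>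
      rw [smul_eq_mul, smul_eq_mul, ← mul_assoc]
      exact hs (r * a) (Ideal.mul_mem_right a _ hr)

end BoundedBelow

section PositivelyGraded

variable {k V N : Type*} [CommSemiring k] [AddCommMonoid V] [Module k V] [AddCommMonoid N]
  [Module k N] (gV : ℤ → Submodule k V) (f : V →ₗ[k] N)

theorem apply_mem_span_image_homogeneous [DirectSum.Decomposition gV] (v : V) :
    f v ∈ Submodule.span k (f '' {w | IsHomogeneousElem gV w}) := by
  classical
  rw [← sum_support_decompose gV v, map_sum]
  exact sum_mem fun n _ => Submodule.subset_span ⟨_, ⟨n, (decompose gV v n).2⟩, rfl⟩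

theorem image_homogeneous_subset_degreeGE_one {gN : ℤ → Submodule k N}
    (hV : ∀ n : ℤ, n ≤ 0 → gV n = ⊥) (hf : ∀ n : ℤ, ∀ v ∈ gV n, f v ∈ gN n) :
    f '' {w | IsHomogeneousElem gV w} ⊆ degreeGE gN 1 := by
  rintro _ ⟨v, ⟨n, hv⟩, rfl⟩
  by_cases hn : 1 ≤ n
  · exact le_degreeGE gN hn (hf n v hv)
  · rw [hV n (by omega), Submodule.mem_bot] at hv
    simp [hv]

end PositivelyGraded

theorem statement11_general {k V A M : Type} [Field k]
    [AddCommGroup V] [Module k V]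
    (gV : ℤ → Submodule k V) [DirectSum.Decomposition gV]
    (hVpos : ∀ n : ℤ, n ≤ 0 → gV n = ⊥)
    [Ring A] [Algebra k A] (gA : ℤ → Submodule k A) [GradedAlgebra gA]
    (φ : V →ₗ[k] A)
    (hcentral : ∀ (v : V) (a : A), φ v * a = a * φ v)
    (hgraded : ∀ n : ℤ, ∀ v ∈ gV n, φ v ∈ gA n)
    (hfin : ∃ s : Finset A, ∀ a : A,
      a ∈ Submodule.span k {x : A | ∃ c ∈ Algebra.adjoin k (Set.range ⇑φ), ∃ t ∈ s, x = c * t})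
    [AddCommGroup M] [Module A M] [Module k M]
    (gM : ℤ → Submodule k M) [DirectSum.Decomposition gM]
    (hsmul : ∀ (i j : ℤ), ∀ a ∈ gA i, ∀ m ∈ gM j, a • m ∈ gM (i + j))
    (hfg : ∃ s : Finset M, (∀ x ∈ s, ∃ n : ℤ, x ∈ gM n) ∧
      Submodule.span A (s : Set M) = ⊤) :
    (⨅ i : ℕ, Submodule.span A {x : M |
        ∃ a ∈ (Submodule.restrictScalars k (gradedRadical gA)) ^ i, ∃ m : M, x = a • m}) =
      ⊥ := by
  have : GradedSMul gA gM := ⟨@fun i j a m ha hm => hsmul i j a ha m hm⟩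
  set G := φ '' {v | IsHomogeneousElem gV v}
  have hG_comm : ∀ g ∈ G, ∀ a : A, Commute g a := by
    rintro _ ⟨v, -, rfl⟩
    exact hcentral v
  have hG_deg := image_homogeneous_subset_degreeGE_one gV φ hVpos hgraded
  have hφG : Set.range φ ⊆ Submodule.span k G :=
    Set.range_subset_iff.mpr (apply_mem_span_image_homogeneous gV φ)
  have : (Ideal.span G).IsTwoSided := Ideal.isTwoSided_span_of_commute hG_comm
  obtain ⟨sA, hsA⟩ := hfin
  have : Module.Finite k (A ⧸ Ideal.span G) := finite_quotient_of_forall_mem_span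
    (hφG.trans ((Submodule.span_le (p := (Ideal.span G).restrictScalars k)).mpr Ideal.subset_span))
    sA hsA
  have : IsNoetherian A (A ⧸ Ideal.span G) := isNoetherian_of_tower k inferInstance
  have : IsArtinian A (A ⧸ Ideal.span G) := isArtinian_of_tower k inferInstance
  obtain ⟨n, hn⟩ := exists_gradedRadical_pow_le (Ideal.homogeneous_span gA G
    (by rintro _ ⟨v, ⟨n, hv⟩, rfl⟩; exact ⟨n, hgraded n v hv⟩))
  obtain ⟨bA, hA⟩ := exists_forall_mem_degreeGE_of_forall_mem_span gA
    (hφG.trans (Submodule.span_le.mpr (hG_deg.trans (degreeGE_antitone gA zero_le_one)))) sA hsA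
  obtain ⟨sM, -, hsM⟩ := hfg
  obtain ⟨c, hc⟩ := exists_forall_mem_degreeGE gM sM
  have := isTwoSided_gradedRadical gA
  refine iInf_span_smul_eq_bot gM gA (fun b => ⟨n * (b - bA).toNat, fun a ha => ?_⟩) hA
    (bM := bA + c) fun m => span_subset_degreeGE gM gA hA hc (hsM.symm ▸ Submodule.mem_top)
  exact degreeGE_antitone gA (by omega) (span_pow_subset_degreeGE gA hG_comm hG_deg hA _
    (Ideal.pow_mul_le_pow hn _ (Ideal.restrictScalars_pow_le _ _ ha)))

/-- In the setup where `A` is a ℤ-graded `k`-algebra which is a graded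
`S(V)`-algebra (via `φ : V →ₗ[k] A`, degree-preserving with central image), finitely
generated as an `S(V)`-module: for every finitely generated graded `A`-module `M`, the
intersection `⋂_{i ≥ 0} rad^{gr,i}(M)` is zero; equivalently (and this is the form
stated here) `⋂_{i ≥ 0} (rad^gr(A))^i · M = {0}`, the `i`-th power of the graded
radical being taken as a `k`-subspace of `A`. -/
theorem statement11 {k V A M : Type} [Field k]
    [AddCommGroup V] [Module k V] [FiniteDimensional k V]
    (gV : ℤ → Submodule k V) [DirectSum.Decomposition gV]
    (hVpos : ∀ n : ℤ, n ≤ 0 → gV n = ⊥)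
    [Ring A] [Algebra k A] (gA : ℤ → Submodule k A) [GradedAlgebra gA]
    (φ : V →ₗ[k] A)
    (hcentral : ∀ (v : V) (a : A), φ v * a = a * φ v)
    (hgraded : ∀ n : ℤ, ∀ v ∈ gV n, φ v ∈ gA n)
    (hfin : ∃ s : Finset A, ∀ a : A,
      a ∈ Submodule.span k {x : A | ∃ c ∈ Algebra.adjoin k (Set.range ⇑φ), ∃ t ∈ s, x = c * t})
    [AddCommGroup M] [Module A M] [Module k M] [IsScalarTower k A M]
    (gM : ℤ → Submodule k M) [DirectSum.Decomposition gM]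
    (hsmul : ∀ (i j : ℤ), ∀ a ∈ gA i, ∀ m ∈ gM j, a • m ∈ gM (i + j))
    (hfg : ∃ s : Finset M, (∀ x ∈ s, ∃ n : ℤ, x ∈ gM n) ∧
      Submodule.span A (s : Set M) = ⊤) :
    (⨅ i : ℕ, Submodule.span A {x : M |
        ∃ a ∈ (Submodule.restrictScalars k (gradedRadical gA)) ^ i, ∃ m : M, x = a • m}) =
      ⊥ :=
  statement11_general gV hVpos gA φ hcentral hgraded hfin gM hsmul hfg
end
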